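/- Let x be an element of infinite order in a locally nilpotent group G, and let H be maximal among the subgroups of G subject to the condition H ∩ ⟨x⟩ = 1. Then x normalizes H. -/

import Mathlib

universe u

theorem Subgroup.normal_iSup_of_normal {G : Type u} [Group G] {ι : Sort*}
    (f : ι → Subgroup G) (h : ∀ i, (f i).Normal) : (⨆ i, f i).Normal := by
  constructor
  intro x hx g
  refine Subgroup.iSup_induction (C := fun y => g * y * g⁻¹ ∈ ⨆ i, f i) f hx
    (fun i y hy => le_iSup f i ((h i).conj_mem y hy g)) (by simpa using Subgroup.one_mem _) ?_
  intro a b ha hb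
  have hab : g * (a * b) * g⁻¹ = (g * a * g⁻¹) * (g * b * g⁻¹) := by group
  rw [hab]; exact mul_mem ha hb

/-- The transfinite upper central series of a group, as ordinal-indexed normal subgroups. -/
noncomputable def transUpperCentralSeriesAux (G : Type u) [Group G] :
    Ordinal.{u} → {H : Subgroup G // H.Normal} := fun o =>
  Ordinal.limitRecOn o
    ⟨⊥, inferInstance⟩
    (fun _ Z => ⟨@upperCentralSeriesStep G _ Z.1 Z.2, by
      haveI := Z.2; show (Subgroup.upperCentralSeriesStep Z.1).Normal; rw [Subgroup.upperCentralSeriesStep_eq_comap_center]; infer_instance⟩)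
    (fun o _ ih => ⟨⨆ (o' : Ordinal.{u}) (ho' : o' < o), (ih o' ho').1,
      Subgroup.normal_iSup_of_normal _ fun o' =>
        Subgroup.normal_iSup_of_normal _ fun ho' => (ih o' ho').2⟩)

/-- The transfinite upper central series. -/
noncomputable def transUpperCentralSeries (G : Type u) [Group G] (o : Ordinal.{u}) :
    Subgroup G := (transUpperCentralSeriesAux G o).1

/-- The hypercentre of a group: the union of the transfinite upper central series. -/
noncomputable def hypercenter (G : Type u) [Group G] : Subgroup G :=
  ⨆ o : Ordinal.{u}, transUpperCentralSeries G o

/-- A group is hypercentral if it equals the union of its transfinite upper central series. -/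
def IsHypercentral (G : Type u) [Group G] : Prop := hypercenter G = ⊤

/-- The hypercentral length: the least ordinal `o` with `Z_o(G) = G`. -/
noncomputable def hypercentralLength (G : Type u) [Group G] : Ordinal.{u} :=
  sInf {o : Ordinal.{u} | transUpperCentralSeries G o = ⊤}

/-- A group is locally nilpotent if every finitely generated subgroup is nilpotent. -/
def IsLocallyNilpotent (G : Type*) [Group G] : Prop :=
  ∀ S : Subgroup G, S.FG → Group.IsNilpotent S

/-!
Let `K = ⟨H, xHx⁻¹⟩`; by maximality it suffices to show `K ∩ ⟨x⟩ = 1`. If `xⁿ ∈ K` with `n ≠ 0`,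
then `xⁿ ∈ ⟨M, xMx⁻¹⟩ ≤ M·F'` for a finitely generated `M ≤ H` and the nilpotent group
`F = ⟨M, x⟩`. This forces `xᵐ ∈ M ≤ H` for some `m > 0`, contradicting `H ∩ ⟨x⟩ = 1` and the
infinite order of `x`. Indeed, with `γ_i` the lower central series of `F`, induction on the class
gives `x^m₁ = u a` with `u ∈ M` and `a` in the last term `γ_c`, so `a` is central and `x^m₁`
normalizes `M`. As the commutator map `γ_i/γ_{i+1} × F → γ_{i+1}/γ_{i+2}` is bilinear and
`⁅m, x^m₁⁆ ∈ M` for `m ∈ M`, induction on `i` shows that every element of `γ_i` has a positive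
power in `(M ∩ γ_i)γ_{i+1}`. For `i = c` this gives `aᵗ ∈ M`, hence `x^(m₁ t) = uᵗ aᵗ ∈ M`.
-/

open Subgroup
open scoped commutatorElement

section Commutator

variable {P : Type*} [Group P] {p q : P}

theorem commutatorElement_pow_left_of_mem_center (h : ⁅p, q⁆ ∈ center P) (t : ℕ) :
    ⁅p ^ t, q⁆ = ⁅p, q⁆ ^ t := by
  induction t with
  | zero => simp
  | succ t ih =>
    rw [pow_succ', commutatorElement_mul_left_eq_conj_mul, ih,
      mem_center_iff.1 (pow_mem h t) p, mul_inv_cancel_right, ← pow_succ]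

theorem commutatorElement_pow_right_of_forall_mem_center (h : ∀ z, ⁅p, z⁆ ∈ center P) (s : ℕ) :
    ⁅p, q ^ s⁆ = ⁅p, q⁆ ^ s := by
  induction s with
  | zero => simp
  | succ s ih =>
    rw [pow_succ, commutatorElement_mul_right_eq_mul_conj, ih, mul_assoc _ (q ^ s),
      mem_center_iff.1 (h q) (q ^ s), ← mul_assoc, mul_inv_cancel_right, ← pow_succ]

theorem commutatorElement_pow_pow_of_forall_mem_center (h : ∀ z, ⁅p, z⁆ ∈ center P)
    (t s : ℕ) : ⁅p ^ t, q ^ s⁆ = ⁅p, q⁆ ^ (t * s) := by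
  rw [commutatorElement_pow_left_of_mem_center (h _),
    commutatorElement_pow_right_of_forall_mem_center h, pow_mul']

theorem commutatorElement_mul_left_of_mem_center {w : P} (hw : w ∈ center P) :
    ⁅p * w, q⁆ = ⁅p, q⁆ := by
  rw [commutatorElement_mul_left_eq_conj_mul,
    commutatorElement_eq_one_iff_commute.2 (mem_center_iff.1 hw q).symm, mul_one,
    mul_inv_cancel, one_mul]

theorem commutatorElement_mem_of_mem_normalizer {M : Subgroup P} {m n : P} (hm : m ∈ M)
    (hn : n ∈ normalizer (M : Set P)) : ⁅m, n⁆ ∈ M := by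
  simpa only [commutatorElement_def, mul_assoc] using
    mul_mem hm ((mem_normalizer_iff.1 hn _).1 (inv_mem hm))

theorem commutatorElement_mem_of_closure_eq_top {W : Subgroup P} [W.Normal] {s : Set P}
    (hs : closure s = ⊤) {g : P} (h : ∀ y ∈ s, ⁅g, y⁆ ∈ W) (y : P) : ⁅g, y⁆ ∈ W := by
  induction (hs ▸ mem_top y : y ∈ closure s) using closure_induction with
  | mem y hy => exact h y hy
  | one => simp
  | mul a b _ _ ha hb =>
    simpa only [commutatorElement_mul_right_eq_mul_conj, mul_assoc] using
      mul_mem ha (Normal.conj_mem ‹_› _ hb a)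
  | inv a _ ha =>
    rw [commutatorElement_inv_right, ← commutatorElement_inv]
    simpa only [inv_inv] using Normal.conj_mem ‹_› _ (inv_mem ha) a⁻¹

end Commutator

namespace Subgroup

variable {P : Type*} [Group P]

def centralIsolator (D : Subgroup P) : Subgroup P where
  carrier := {z | z ∈ center P ∧ ∃ t, 0 < t ∧ z ^ t ∈ D}
  one_mem' := ⟨one_mem _, 1, one_pos, by simp [D.one_mem]⟩
  mul_mem' := by
    rintro a b ⟨ha, s, hs, has⟩ ⟨hb, t, ht, hbt⟩
    refine ⟨mul_mem ha hb, s * t, Nat.mul_pos hs ht, ?_⟩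
    rw [Commute.mul_pow (mem_center_iff.1 hb a), pow_mul, pow_mul' b]
    exact mul_mem (pow_mem has t) (pow_mem hbt s)
  inv_mem' := by
    rintro a ⟨ha, s, hs, has⟩
    exact ⟨inv_mem ha, s, hs, by simpa using inv_mem has⟩

theorem mem_centralIsolator {D : Subgroup P} {z : P} :
    z ∈ centralIsolator D ↔ z ∈ center P ∧ ∃ t, 0 < t ∧ z ^ t ∈ D := Iff.rfl

instance (D : Subgroup P) : (centralIsolator D).Normal :=
  ⟨fun z hz g => by rwa [mem_center_iff.1 hz.1 g, mul_inv_cancel_right]⟩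

theorem pow_natAbs_mem_iff {K : Subgroup P} {a : P} {n : ℤ} :
    a ^ n.natAbs ∈ K ↔ a ^ n ∈ K := by
  cases n <;> simp

theorem exists_fg_le_of_mem_sup_map {H : Subgroup P} (f : P →* P) {g : P}
    (hg : g ∈ H ⊔ H.map f) : ∃ M ≤ H, M.FG ∧ g ∈ M ⊔ M.map f := by
  rw [sup_eq_closure, coe_map] at hg
  induction hg using closure_induction with
  | mem g hg =>
    rcases hg with hg | ⟨h, hh, rfl⟩
    · exact ⟨closure {g}, (closure_le _).2 (by simpa using hg), ⟨{g}, by simp⟩,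
        mem_sup_left (subset_closure rfl)⟩
    · exact ⟨closure {h}, (closure_le _).2 (by simpa using hh), ⟨{h}, by simp⟩,
        mem_sup_right (mem_map_of_mem f (subset_closure rfl))⟩
  | one => exact ⟨⊥, bot_le, FG.bot, one_mem _⟩
  | mul a b _ _ ha hb =>
    obtain ⟨M₁, hM₁, hfg₁, ha⟩ := ha
    obtain ⟨M₂, hM₂, hfg₂, hb⟩ := hb
    exact ⟨M₁ ⊔ M₂, sup_le hM₁ hM₂, hfg₁.sup hfg₂,
      mul_mem (sup_le_sup le_sup_left (map_mono le_sup_left) ha)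
        (sup_le_sup le_sup_right (map_mono le_sup_right) hb)⟩
  | inv a _ ha =>
    obtain ⟨M, hM, hfg, ha⟩ := ha
    exact ⟨M, hM, hfg, inv_mem ha⟩

end Subgroup

section Quotient

open QuotientGroup

variable {Q : Type*} [Group Q] {N D : Subgroup Q} [N.Normal]

theorem mk'_mem_map_mk'_iff (hND : N ≤ D) {a : Q} : mk' N a ∈ D.map (mk' N) ↔ a ∈ D := by
  rw [← mem_comap, comap_map_eq_self (by rwa [ker_mk'])]

theorem mk'_mem_center_of_forall_commutatorElement_mem {g : Q} (hg : ∀ y, ⁅g, y⁆ ∈ N) :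
    mk' N g ∈ center (Q ⧸ N) := by
  rw [mem_center_iff]
  intro z
  obtain ⟨y, rfl⟩ := mk'_surjective N z
  refine (commutatorElement_eq_one_iff_commute.1 ?_).symm.eq
  rw [← map_commutatorElement, mk'_apply, eq_one_iff]
  exact hg y

theorem mem_comap_centralIsolator_iff (hND : N ≤ D) {g : Q} (hg : ∀ y, ⁅g, y⁆ ∈ N) :
    g ∈ (centralIsolator (D.map (mk' N))).comap (mk' N) ↔ ∃ t, 0 < t ∧ g ^ t ∈ D := by
  simp only [mem_comap, mem_centralIsolator, ← map_pow, mk'_mem_map_mk'_iff hND,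
    mk'_mem_center_of_forall_commutatorElement_mem hg, true_and]

theorem exists_pow_mem_sup_commutator {M : Subgroup Q} {x : Q} (hgen : M ⊔ zpowers x = ⊤)
    {n : ℕ} (hn : 0 < n) (hxn : x ^ n ∈ M ⊔ commutator Q) (g : Q) :
    ∃ t, 0 < t ∧ g ^ t ∈ M ⊔ commutator Q := by
  have hW (a : Q) := mem_comap_centralIsolator_iff (le_sup_right : _ ≤ M ⊔ commutator Q) (g := a)
    fun b => by rw [commutator_def]; exact commutator_mem_commutator (mem_top a) (mem_top b)
  have hle : M ⊔ zpowers x ≤ (centralIsolator ((M ⊔ commutator Q).map (mk' _))).comap (mk' _) :=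
    sup_le (fun m hm => (hW m).2 ⟨1, one_pos, by simpa using mem_sup_left hm⟩)
      (zpowers_le.2 ((hW x).2 ⟨n, hn, hxn⟩))
  exact (hW g).1 (hle (hgen ▸ mem_top g))

theorem exists_pow_mem_inf_lowerCentralSeries_sup {M : Subgroup Q}
    (hgen : closure {y : Q | ∃ s, 0 < s ∧ y ^ s ∈ normalizer (M : Set Q)} = ⊤)
    (hbase : ∀ g : Q, ∃ t, 0 < t ∧ g ^ t ∈ M ⊔ commutator Q) (i : ℕ) :
    ∀ g ∈ (⊤ : Subgroup Q).lowerCentralSeries i, ∃ t, 0 < t ∧ g ^ t ∈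
      M ⊓ (⊤ : Subgroup Q).lowerCentralSeries i ⊔ (⊤ : Subgroup Q).lowerCentralSeries (i + 1) := by
  induction i with
  | zero => simpa [commutator_def] using hbase
  | succ i ih =>
    set N := (⊤ : Subgroup Q).lowerCentralSeries (i + 1 + 1)
    set D := M ⊓ (⊤ : Subgroup Q).lowerCentralSeries (i + 1) ⊔ N
    have hND : N ≤ D := le_sup_right
    have hN : ∀ w ∈ (⊤ : Subgroup Q).lowerCentralSeries (i + 1), ∀ y, ⁅w, y⁆ ∈ N :=
      fun w hw y => commutator_mem_commutator hw (mem_top y)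
    have hcen : ∀ w ∈ (⊤ : Subgroup Q).lowerCentralSeries (i + 1), mk' N w ∈ center (Q ⧸ N) :=
      fun w hw => mk'_mem_center_of_forall_commutatorElement_mem (hN w hw)
    intro g' hg'
    refine (mem_comap_centralIsolator_iff hND (hN g' hg')).1
      (commutator_le.2 (fun g hg y _ => ?_) hg')
    refine commutatorElement_mem_of_closure_eq_top hgen (fun y ⟨s, hs, hys⟩ => ?_) y
    obtain ⟨t, ht, hgt⟩ := ih g hg
    obtain ⟨m, hm, w, hw, hmw⟩ := mem_sup_of_normal_right.1 hgt
    have hgy : ⁅g, y⁆ ∈ (⊤ : Subgroup Q).lowerCentralSeries (i + 1) :=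
      commutator_mem_commutator hg (mem_top y)
    refine (mem_comap_centralIsolator_iff hND (hN _ hgy)).2 ⟨t * s, Nat.mul_pos ht hs, ?_⟩
    have hmy : ⁅m, y ^ s⁆ ∈ D := mem_sup_left
      ⟨commutatorElement_mem_of_mem_normalizer hm.1 hys, commutator_mem_commutator hm.2 (mem_top _)⟩
    have hg_cen : ∀ z, ⁅mk' N g, z⁆ ∈ center (Q ⧸ N) := by
      intro z
      obtain ⟨z, rfl⟩ := mk'_surjective N z
      rw [← map_commutatorElement]
      exact hcen _ (commutator_mem_commutator hg (mem_top z))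
    -- in `Q ⧸ N`, the commutator is bilinear on `γ_i × Q` and `w ∈ γ_{i+1}` is central
    have hmk : mk' N (⁅g, y⁆ ^ (t * s)) = mk' N ⁅m, y ^ s⁆ := by
      rw [map_pow, map_commutatorElement, ← commutatorElement_pow_pow_of_forall_mem_center hg_cen,
        ← map_pow, ← map_pow, ← hmw, map_mul,
        commutatorElement_mul_left_of_mem_center (hcen w hw), map_commutatorElement]
    rw [← mk'_mem_map_mk'_iff hND, hmk]
    exact mem_map_of_mem _ hmy

end Quotient

theorem exists_pow_mem_of_lowerCentralSeries_eq_bot {Q : Type*} [Group Q] {M : Subgroup Q}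
    {x : Q} (hgen : M ⊔ zpowers x = ⊤) {c : ℕ} (hc : (⊤ : Subgroup Q).lowerCentralSeries c = ⊥)
    {n : ℕ} (hn : 0 < n) (hxn : x ^ n ∈ M ⊔ commutator Q) : ∃ m, 0 < m ∧ x ^ m ∈ M := by
  induction c generalizing Q with
  | zero =>
    have hx : x ∈ (⊥ : Subgroup Q) := hc ▸ mem_top x
    exact ⟨1, one_pos, by simp [mem_bot.1 hx]⟩
  | succ c ih =>
    set A := (⊤ : Subgroup Q).lowerCentralSeries c
    let π := QuotientGroup.mk' A
    have hπ : Function.Surjective π := QuotientGroup.mk'_surjective A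
    have hmap_top : (⊤ : Subgroup Q).map π = ⊤ := map_top_of_surjective π hπ
    obtain ⟨m₁, hm₁, hxm₁⟩ := ih (M := M.map π) (x := π x)
      (by rw [← MonoidHom.map_zpowers, ← Subgroup.map_sup, hgen, hmap_top])
      (by rw [← hmap_top, ← map_lowerCentralSeries, Subgroup.map_eq_bot_iff, QuotientGroup.ker_mk'])
      (by
        rw [← map_pow, commutator_def, ← hmap_top, ← map_commutator, ← commutator_def,
          ← Subgroup.map_sup]
        exact mem_map_of_mem π hxn)
    have hxm₁ : x ^ m₁ ∈ M ⊔ A := by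
      rwa [← QuotientGroup.ker_mk' A, ← comap_map_eq, mem_comap, map_pow]
    obtain ⟨u, hu, a, ha, hua⟩ := mem_sup_of_normal_right.1 hxm₁
    have hacen : a ∈ center Q := commutator_top_right_eq_bot_iff_le_center.1 hc ha
    have hgen' : closure {y : Q | ∃ s, 0 < s ∧ y ^ s ∈ normalizer (M : Set Q)} = ⊤ := by
      refine eq_top_iff.2 (hgen ▸ sup_le (fun m hm => subset_closure ⟨1, one_pos, ?_⟩)
        (zpowers_le.2 (subset_closure ⟨m₁, hm₁, ?_⟩)))
      · simpa using le_normalizer hm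
      · rw [← hua]
        exact mul_mem (le_normalizer hu) (center_le_normalizer _ hacen)
    obtain ⟨t, ht, hat⟩ := exists_pow_mem_inf_lowerCentralSeries_sup hgen'
      (exists_pow_mem_sup_commutator hgen hn hxn) c a ha
    rw [hc, sup_bot_eq] at hat
    refine ⟨m₁ * t, Nat.mul_pos hm₁ ht, ?_⟩
    rw [pow_mul, ← hua, Commute.mul_pow (mem_center_iff.1 hacen u)]
    exact mul_mem (pow_mem hu t) hat.1

theorem exists_pow_mem_of_isNilpotent_sup_zpowers {G : Type*} [Group G] {M : Subgroup G} {x : G}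
    (hnil : Group.IsNilpotent ↥(M ⊔ zpowers x)) {n : ℕ} (hn : 0 < n)
    (hxn : x ^ n ∈ M ⊔ M.map (MulAut.conj x).toMonoidHom) : ∃ m, 0 < m ∧ x ^ m ∈ M := by
  set S := M ⊔ zpowers x
  have hMS : M ≤ S := le_sup_left
  have hxS : x ∈ S := mem_sup_right (mem_zpowers x)
  obtain ⟨c, hc⟩ := Subgroup.nilpotent_iff_lowerCentralSeries.1 hnil
  have hgen : M.subgroupOf S ⊔ zpowers ⟨x, hxS⟩ = ⊤ := by
    refine map_injective S.subtype_injective ?_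
    rw [Subgroup.map_sup, subgroupOf_map_subtype, inf_eq_left.2 hMS, MonoidHom.map_zpowers,
      ← MonoidHom.range_eq_map, range_subtype]
    rfl
  have hconj : M.map (MulAut.conj x).toMonoidHom ≤ M ⊔ ⁅S, S⁆ := by
    rintro _ ⟨m, hm, rfl⟩
    rw [MulEquiv.coe_toMonoidHom, conj_eq_commutatorElement_mul]
    exact mul_mem (mem_sup_right (commutator_mem_commutator hxS (hMS hm))) (mem_sup_left hm)
  have hxn' : (⟨x, hxS⟩ : S) ^ n ∈ M.subgroupOf S ⊔ commutator S := by
    rw [← mem_map_iff_mem S.subtype_injective, Subgroup.map_sup, subgroupOf_map_subtype,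
      inf_eq_left.2 hMS, map_subtype_commutator]
    exact sup_le le_sup_left hconj hxn
  obtain ⟨m, hm, hxm⟩ := exists_pow_mem_of_lowerCentralSeries_eq_bot hgen hc hn hxn'
  exact ⟨m, hm, mem_subgroupOf.1 hxm⟩

/-- Let `x` be an element of infinite order in a locally nilpotent group `G`, and let `H`
be maximal among the subgroups of `G` with `H ∩ ⟨x⟩ = 1`.  Then `x` normalizes `H`. -/
theorem normalizes_of_maximal_trivial_inter_zpowers {G : Type u} [Group G]
    (hG : IsLocallyNilpotent G) (x : G) (hx : ¬ IsOfFinOrder x)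
    (H : Subgroup G) (hmeet : H ⊓ Subgroup.zpowers x = ⊥)
    (hmax : ∀ K : Subgroup G, H ≤ K → K ⊓ Subgroup.zpowers x = ⊥ → K = H) :
    ∀ h ∈ H, x * h * x⁻¹ ∈ H := by
  set K := H ⊔ H.map (MulAut.conj x).toMonoidHom
  have hK : K ⊓ zpowers x = ⊥ := by
    refine eq_bot_iff.2 fun g hg => ?_
    obtain ⟨hgK, n, rfl⟩ := mem_inf.1 hg
    rcases eq_or_ne n 0 with rfl | hn
    · simp
    obtain ⟨M, hMH, hMfg, hxn⟩ := exists_fg_le_of_mem_sup_map _ (pow_natAbs_mem_iff.2 hgK)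
    obtain ⟨m, hm, hxm⟩ := exists_pow_mem_of_isNilpotent_sup_zpowers
      (hG _ (hMfg.sup ⟨{x}, by simp [zpowers_eq_closure]⟩)) (Int.natAbs_pos.2 hn) hxn
    have hxm1 : x ^ m = 1 := by
      rw [← mem_bot, ← hmeet]
      exact ⟨hMH hxm, pow_mem (mem_zpowers x) m⟩
    exact absurd (isOfFinOrder_iff_pow_eq_one.2 ⟨m, hm, hxm1⟩) hx
  intro h hh
  rw [← hmax K le_sup_left hK]
  exact mem_sup_right (mem_map_of_mem _ hh)
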